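/- For b > 0 and z ≥ 0, the function q ↦ (C_{q+z}/C_q)·exp(z/b) is monotonically nonincreasing in q on {q ∈ [l,u] : q+z ≤ u}; equivalently its partial derivative with respect to q is ≤ 0. -/

import Mathlib

/-!
`C` is one minus a sum of two exponentials of affine functions, hence concave; its values at
both endpoints equal `(1 - exp (-(u - l) / b)) / 2 > 0`, so it is positive on `[l, u]`. A positive
concave function is log-concave, and a concave function has antitone increments
`x ↦ φ (x + z) - φ x` for `z ≥ 0`; applied to `log ∘ C` this makes `C (q + z) / C q` antitone,
and `exp (z / b)` is a positive constant.
-/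

open Real

/-- Normalisation constant of the bounded Laplace mechanism on `[l,u]`. -/
noncomputable def C (l u b q : ℝ) : ℝ :=
  1 - (1 / 2) * (Real.exp (-(q - l) / b) + Real.exp (-(u - q) / b))

open Set

section Concave

variable {s : Set ℝ} {φ g : ℝ → ℝ} {z : ℝ}

theorem ConcaveOn.antitoneOn_add_sub (hφ : ConcaveOn ℝ s φ) (hz : 0 ≤ z) :
    AntitoneOn (fun x => φ (x + z) - φ x) {x | x ∈ s ∧ x + z ∈ s} := by
  rintro a ⟨ha, -⟩ b ⟨-, hbz⟩ hab
  rcases (add_nonneg (sub_nonneg.2 hab) hz).eq_or_lt with hd | hd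
  · obtain rfl : a = b := by linarith
    exact le_rfl
  -- `b` and `a + z` are the convex combinations of `a` and `b + z` with swapped weights
  set w := (b - a) / (b - a + z)
  have hw₀ : 0 ≤ w := div_nonneg (sub_nonneg.2 hab) hd.le
  have hw₁ : 0 ≤ 1 - w := sub_nonneg.2 ((div_le_one hd).2 (by linarith))
  have hb_eq : (1 - w) • a + w • (b + z) = b := by
    simp only [smul_eq_mul, w]
    field_simp
    ring
  have haz_eq : w • a + (1 - w) • (b + z) = a + z := by
    simp only [smul_eq_mul, w]
    field_simp
    ring
  have h₁ := hφ.2 ha hbz hw₁ hw₀ (by ring)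
  have h₂ := hφ.2 ha hbz hw₀ hw₁ (by ring)
  rw [hb_eq] at h₁
  rw [haz_eq] at h₂
  simp only [smul_eq_mul] at h₁ h₂ ⊢
  linarith

theorem ConcaveOn.log_comp (hg : ConcaveOn ℝ s g) (hpos : ∀ x ∈ s, 0 < g x) :
    ConcaveOn ℝ s fun x => log (g x) := by
  refine ⟨hg.1, fun x hx y hy a b ha hb hab => ?_⟩
  calc a • log (g x) + b • log (g y) ≤ log (a • g x + b • g y) :=
        strictConcaveOn_log_Ioi.concaveOn.2 (hpos x hx) (hpos y hy) ha hb hab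
    _ ≤ log (g (a • x + b • y)) :=
        log_le_log ((convex_Ioi (0 : ℝ)) (hpos x hx) (hpos y hy) ha hb hab) (hg.2 hx hy ha hb hab)

theorem ConcaveOn.antitoneOn_comp_add_div (hg : ConcaveOn ℝ s g) (hpos : ∀ x ∈ s, 0 < g x)
    (hz : 0 ≤ z) : AntitoneOn (fun x => g (x + z) / g x) {x | x ∈ s ∧ x + z ∈ s} := by
  rintro a ha b hb hab
  have := (hg.log_comp hpos).antitoneOn_add_sub hz ha hb hab
  simp only at this ⊢
  rw [div_le_div_iff₀ (hpos b hb.1) (hpos a ha.1),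
    ← log_le_log_iff (mul_pos (hpos _ hb.2) (hpos _ ha.1)) (mul_pos (hpos _ ha.2) (hpos _ hb.1)),
    log_mul (hpos _ hb.2).ne' (hpos _ ha.1).ne', log_mul (hpos _ ha.2).ne' (hpos _ hb.1).ne']
  linarith

end Concave

theorem convexOn_exp_mul_add (c d : ℝ) : ConvexOn ℝ univ fun x => exp (c * x + d) := by
  simpa [Function.comp_def] using
    convexOn_exp.comp_affineMap (c • AffineMap.id ℝ ℝ + AffineMap.const ℝ ℝ d)

theorem concaveOn_C (l u b : ℝ) : ConcaveOn ℝ univ (C l u b) := by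
  have h₁ := convexOn_exp_mul_add (-b⁻¹) (l / b)
  have h₂ := convexOn_exp_mul_add b⁻¹ (-u / b)
  refine ⟨convex_univ, fun x _ y _ s t hs ht hst => ?_⟩
  have e₁ := h₁.2 (mem_univ x) (mem_univ y) hs ht hst
  have e₂ := h₂.2 (mem_univ x) (mem_univ y) hs ht hst
  simp only [C, smul_eq_mul] at e₁ e₂ ⊢
  have k : ∀ q, -(q - l) / b = -b⁻¹ * q + l / b := fun q => by ring
  have k' : ∀ q, -(u - q) / b = b⁻¹ * q + -u / b := fun q => by ring
  simp only [k, k']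
  linear_combination (1/2) * e₁ + (1/2) * e₂ + hst

theorem C_pos {l u b q : ℝ} (hlu : l < u) (hb : 0 < b) (hq : q ∈ Icc l u) : 0 < C l u b q := by
  have hl : 0 < C l u b l := by
    have : exp (-(u - l) / b) < 1 := exp_lt_one_iff.2 (div_neg_of_neg_of_pos (by linarith) hb)
    simp only [C, sub_self, neg_zero, zero_div, exp_zero]
    linarith
  have := (concaveOn_C l u b).ge_on_segment (mem_univ l) (mem_univ u)
    (by rwa [segment_eq_Icc hlu.le])
  have hlu_eq : C l u b l = C l u b u := by simp only [C]; ring_nf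
  rw [← hlu_eq, min_self] at this
  exact hl.trans_le this

theorem antitone_in_q (l u b z : ℝ) (hlu : l < u) (hb : 0 < b) (hz : 0 ≤ z) :
    AntitoneOn (fun q => (C l u b (q + z) / C l u b q) * Real.exp (z / b))
      {q : ℝ | q ∈ Set.Icc l u ∧ q + z ≤ u} := by
  have hratio := ((concaveOn_C l u b).subset (subset_univ _) (convex_Icc l u))
    |>.antitoneOn_comp_add_div (fun q hq => C_pos hlu hb hq) hz
  have hdom : {q : ℝ | q ∈ Icc l u ∧ q + z ≤ u} ⊆ {q | q ∈ Icc l u ∧ q + z ∈ Icc l u} :=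
    fun q ⟨hq, hqz⟩ => ⟨hq, by linarith [hq.1], hqz⟩
  exact fun q₁ h₁ q₂ h₂ h =>
    mul_le_mul_of_nonneg_right (hratio (hdom h₁) (hdom h₂) h) (exp_pos _).le
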